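/- arXiv:2410.03059 — 5 statements merged into one kernel-verified Lean document; each statement's English description precedes it below -/
import Mathlib

section
/- Let A, B be bounded Hermitian operators. Then for all t ≥ 0: ‖[A, e^{-it(A+B)}]‖ ≥ t‖[A,B]‖ - (t²/2)‖[A+B,[A,B]]‖ in operator norm. -/
/-!
Put `W = -i(A+B)`, which is skew-adjoint, and follow the Heisenberg evolution
`g(s) = e^{-sW} A e^{sW}`. Since `e^{sW}` is unitary, `‖g(t) - A‖ = ‖[A, e^{tW}]‖`, and `g` has
derivative `e^{-sW} [A, W] e^{sW}`, whose own derivative has the constant norm `‖[[A, W], W]‖`.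
A second-order Taylor estimate therefore gives `‖g(t) - A - t[A, W]‖ ≤ (t²/2)‖[[A, W], W]‖`, and
the triangle inequality finishes the proof, with `[A, W] = -i[A, B]` and
`[[A, W], W] = [A + B, [A, B]]`.
-/

open NormedSpace Set

attribute [local instance] LieRing.ofAssociativeRing

theorem norm_sub_sub_smul_le_of_hasDerivAt {F : Type*} [NormedAddCommGroup F] [NormedSpace ℝ F]
    {f f' : ℝ → F} {K t : ℝ} (hf : ∀ s, HasDerivAt f (f' s) s)
    (hf' : ∀ s ∈ Ico 0 t, ‖f' s - f' 0‖ ≤ K * s) (ht : 0 ≤ t) :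
    ‖f t - f 0 - t • f' 0‖ ≤ K / 2 * t ^ 2 := by
  have hB (s : ℝ) : HasDerivAt (fun s => K / 2 * s ^ 2) (K * s) s :=
    ((hasDerivAt_pow 2 s).const_mul (K / 2)).congr_deriv (by push_cast; ring)
  have hg (s : ℝ) : HasDerivAt (fun s => f s - f 0 - s • f' 0) (f' s - f' 0) s :=
    (((hf s).sub_const _).sub ((hasDerivAt_id s).smul_const (f' 0))).congr_deriv (by simp)
  exact image_norm_le_of_norm_deriv_right_le_deriv_boundary
    (fun s _ => (hg s).continuousAt.continuousWithinAt) (fun s _ => (hg s).hasDerivWithinAt)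
    (by simp) hB hf' ⟨ht, le_rfl⟩

section ConjExp

variable {𝔸 : Type*} [NormedRing 𝔸] [NormedAlgebra ℝ 𝔸]

noncomputable def conjExp (W X : 𝔸) (s : ℝ) : 𝔸 := exp (s • -W) * X * exp (s • W)

@[simp]
theorem conjExp_zero (W X : 𝔸) : conjExp W X 0 = X := by simp [conjExp]

variable [CompleteSpace 𝔸]

theorem hasDerivAt_conjExp (W X : 𝔸) (s : ℝ) :
    HasDerivAt (conjExp W X) (conjExp W ⁅X, W⁆ s) s := by
  refine (((hasDerivAt_exp_smul_const (-W) s).mul_const X).mul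
    (hasDerivAt_exp_smul_const' W s)).congr_deriv ?_
  simp only [conjExp, Ring.lie_def]
  noncomm_ring

variable [StarRing 𝔸] [CStarRing 𝔸] [StarModule ℝ 𝔸] {W : 𝔸}

theorem exp_smul_mem_unitary (hW : W ∈ skewAdjoint 𝔸) (s : ℝ) : exp (s • W) ∈ unitary 𝔸 :=
  letI : NormedAlgebra ℚ 𝔸 := .restrictScalars ℚ ℝ 𝔸
  exp_mem_unitary_of_mem_skewAdjoint (skewAdjoint.smul_mem s hW)

theorem norm_conjExp (hW : W ∈ skewAdjoint 𝔸) (X : 𝔸) (s : ℝ) : ‖conjExp W X s‖ = ‖X‖ := by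
  rw [conjExp, mul_assoc, CStarRing.norm_mem_unitary_mul _ (exp_smul_mem_unitary (neg_mem hW) s),
    CStarRing.norm_mul_mem_unitary _ (exp_smul_mem_unitary hW s)]

theorem norm_conjExp_sub_self (hW : W ∈ skewAdjoint 𝔸) (X : 𝔸) (s : ℝ) :
    ‖conjExp W X s - X‖ = ‖⁅X, exp (s • W)⁆‖ := by
  let : NormedAlgebra ℚ 𝔸 := .restrictScalars ℚ ℝ 𝔸
  have hinv : exp (s • -W) * exp (s • W) = 1 := by
    rw [smul_neg, ← exp_add_of_commute ((Commute.refl _).neg_left), neg_add_cancel, exp_zero]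
  have hfactor : conjExp W X s - X = exp (s • -W) * ⁅X, exp (s • W)⁆ := by
    rw [Ring.lie_def, mul_sub, ← mul_assoc, ← mul_assoc, hinv, one_mul, conjExp]
  rw [hfactor, CStarRing.norm_mem_unitary_mul _ (exp_smul_mem_unitary (neg_mem hW) s)]

theorem norm_conjExp_sub_self_le (hW : W ∈ skewAdjoint 𝔸) (X : 𝔸) {s : ℝ} (hs : 0 ≤ s) :
    ‖conjExp W X s - X‖ ≤ ‖⁅X, W⁆‖ * s := by
  simpa using norm_image_sub_le_of_norm_deriv_le_segment' (a := 0) (b := s)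
    (fun r _ => (hasDerivAt_conjExp W X r).hasDerivWithinAt)
    (fun r _ => (norm_conjExp hW _ r).le) s ⟨hs, le_rfl⟩

theorem norm_conjExp_sub_sub_smul_le (hW : W ∈ skewAdjoint 𝔸) (X : 𝔸) {t : ℝ} (ht : 0 ≤ t) :
    ‖conjExp W X t - X - t • ⁅X, W⁆‖ ≤ ‖⁅⁅X, W⁆, W⁆‖ / 2 * t ^ 2 := by
  have := norm_sub_sub_smul_le_of_hasDerivAt (hasDerivAt_conjExp W X)
    (fun s hs => by simpa only [conjExp_zero] using norm_conjExp_sub_self_le hW ⁅X, W⁆ hs.1) ht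
  rwa [conjExp_zero, conjExp_zero] at this

theorem sub_le_norm_lie_exp_smul (hW : W ∈ skewAdjoint 𝔸) (X : 𝔸) {t : ℝ} (ht : 0 ≤ t) :
    t * ‖⁅X, W⁆‖ - t ^ 2 / 2 * ‖⁅⁅X, W⁆, W⁆‖ ≤ ‖⁅X, exp (t • W)⁆‖ := by
  have htri := norm_le_insert (conjExp W X t - X) (t • ⁅X, W⁆)
  rw [norm_smul, Real.norm_of_nonneg ht, norm_conjExp_sub_self hW] at htri
  linarith [norm_conjExp_sub_sub_smul_le hW X ht]

end ConjExp

open Complex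

/-- `‖[A, e^{-it(A+B)}]‖ ≥ t‖[A,B]‖ - (t²/2)‖[A+B,[A,B]]‖` for all `t ≥ 0`. -/
theorem stmt8 {E : Type*} [NormedAddCommGroup E] [InnerProductSpace ℂ E] [CompleteSpace E]
    (A B : E →L[ℂ] E) (hA : IsSelfAdjoint A) (hB : IsSelfAdjoint B)
    (t : ℝ) (ht : 0 ≤ t) :
    t * ‖A * B - B * A‖
        - t ^ 2 / 2 * ‖(A + B) * (A * B - B * A) - (A * B - B * A) * (A + B)‖
      ≤ ‖A * NormedSpace.exp ((-(Complex.I * t)) • (A + B))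
          - NormedSpace.exp ((-(Complex.I * t)) • (A + B)) * A‖ := by
  set W := (-I) • (A + B)
  have hW : W ∈ skewAdjoint (E →L[ℂ] E) :=
    (hA.add hB).smul_mem_skewAdjoint (neg_mem (show I ∈ skewAdjoint ℂ from conj_I))
  have hlie : ⁅A, W⁆ = (-I) • (A * B - B * A) := by
    simp only [W, Ring.lie_def, mul_smul_comm, smul_mul_assoc, ← smul_sub]
    noncomm_ring
  have hlie₂ : ⁅⁅A, W⁆, W⁆ = (A + B) * (A * B - B * A) - (A * B - B * A) * (A + B) := by
    simp only [hlie, W, Ring.lie_def, mul_smul_comm, smul_mul_assoc, smul_smul, neg_mul_neg,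
      I_mul_I, neg_one_smul]
    abel
  have hexp : t • W = (-(I * t)) • (A + B) := by
    rw [← Complex.coe_smul, smul_smul, mul_neg, mul_comm]
  have key := sub_le_norm_lie_exp_smul hW A ht
  rwa [hlie₂, hlie, hexp, Ring.lie_def, norm_smul, norm_neg, norm_I, one_mul] at key
end

section
/- Let A, B be bounded Hermitian operators. Then for all t ≥ 0: ‖[A,[A, e^{-it(A+B)}]]‖ ≤ 2t‖A‖·‖[A,B]‖ in operator norm. -/
/-!
With `H = A + B`, `x = -iH` and `U = exp (t • x)`, the path
`s ↦ exp ((t - s) • x) * a * exp (s • x)` runs from `U * a` to `a * U`, and its derivative is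
`[a, x]` conjugated by unitaries; hence `‖[A, U]‖ ≤ t ‖[H, A]‖ = t ‖[A, B]‖`.
The outer commutator with `A` costs a factor `2 ‖A‖`.
-/

open Complex NormedSpace

theorem norm_mul_exp_smul_sub_exp_smul_mul_le {R : Type*} [NormedRing R] [NormedAlgebra ℝ R]
    [CompleteSpace R] [StarRing R] [CStarRing R] {x : R}
    (hx : ∀ s : ℝ, exp (s • x) ∈ unitary R) (a : R) (t : ℝ) :
    ‖a * exp (t • x) - exp (t • x) * a‖ ≤ |t| * ‖x * a - a * x‖ := by
  have hderiv : ∀ s : ℝ, HasDerivAt (fun s : ℝ => exp ((t - s) • x) * a * exp (s • x))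
      (exp ((t - s) • x) * (a * x - x * a) * exp (s • x)) s := by
    intro s
    refine ((((hasDerivAt_exp_smul_const x (t - s)).scomp s
      ((hasDerivAt_id s).const_sub t)).mul_const a).mul
        (hasDerivAt_exp_smul_const' x s)).congr_deriv ?_
    simp only [Function.comp_apply, neg_smul, one_smul]
    noncomm_ring
  have hbound : ∀ s : ℝ,
      ‖exp ((t - s) • x) * (a * x - x * a) * exp (s • x)‖ = ‖x * a - a * x‖ := by
    intro s
    rw [CStarRing.norm_mul_mem_unitary _ (hx _), CStarRing.norm_mem_unitary_mul _ (hx _),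
      norm_sub_rev]
  simpa [Real.norm_eq_abs, mul_comm] using
    convex_univ.norm_image_sub_le_of_norm_hasDerivWithin_le
      (fun s _ => (hderiv s).hasDerivWithinAt) (fun s _ => (hbound s).le)
      (Set.mem_univ 0) (Set.mem_univ t)

theorem norm_mul_sub_mul_le_two_mul {R : Type*} [NonUnitalSeminormedRing R] (a c : R) :
    ‖a * c - c * a‖ ≤ 2 * ‖a‖ * ‖c‖ :=
  calc ‖a * c - c * a‖ ≤ ‖a‖ * ‖c‖ + ‖c‖ * ‖a‖ :=
        (norm_sub_le _ _).trans (add_le_add (norm_mul_le _ _) (norm_mul_le _ _))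
    _ = 2 * ‖a‖ * ‖c‖ := by ring

theorem IsSelfAdjoint.norm_mul_exp_sub_exp_mul_le {R : Type*} [CStarAlgebra R] {H : R}
    (hH : IsSelfAdjoint H) (a : R) (t : ℝ) :
    ‖a * NormedSpace.exp ((-(I * t)) • H) - NormedSpace.exp ((-(I * t)) • H) * a‖
      ≤ |t| * ‖H * a - a * H‖ := by
  have hunitary : ∀ s : ℝ, NormedSpace.exp (s • -(I • H)) ∈ unitary R := fun s => by
    rw [smul_neg, ← neg_smul, smul_comm]
    exact (selfAdjoint.expUnitary ⟨(-s) • H, (IsSelfAdjoint.all (-s)).smul hH⟩).prop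
  have hexp : (-(I * t)) • H = t • -(I • H) := by
    rw [neg_smul, smul_neg, ← Complex.coe_smul, smul_smul, mul_comm (t : ℂ)]
  have hcomm : -(I • H) * a - a * -(I • H) = -I • (H * a - a * H) := by
    simp only [neg_mul, mul_neg, smul_mul_assoc, mul_smul_comm, neg_smul, smul_sub]
  have h := norm_mul_exp_smul_sub_exp_smul_mul_le hunitary a t
  rwa [hcomm, norm_smul, norm_neg, norm_I, one_mul, ← hexp] at h

/-- `‖[A,[A, e^{-it(A+B)}]]‖ ≤ 2t‖A‖‖[A,B]‖` for all `t ≥ 0`. -/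
theorem stmt10 {E : Type*} [NormedAddCommGroup E] [InnerProductSpace ℂ E] [CompleteSpace E]
    (A B : E →L[ℂ] E) (hA : IsSelfAdjoint A) (hB : IsSelfAdjoint B)
    (t : ℝ) (ht : 0 ≤ t) :
    ‖A * (A * NormedSpace.exp ((-(Complex.I * t)) • (A + B))
            - NormedSpace.exp ((-(Complex.I * t)) • (A + B)) * A)
        - (A * NormedSpace.exp ((-(Complex.I * t)) • (A + B))
            - NormedSpace.exp ((-(Complex.I * t)) • (A + B)) * A) * A‖
      ≤ 2 * t * ‖A‖ * ‖A * B - B * A‖ := by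
  have hcomm : (A + B) * A - A * (A + B) = -(A * B - B * A) := by noncomm_ring
  have hC := IsSelfAdjoint.norm_mul_exp_sub_exp_mul_le (hA.add hB) A t
  rw [hcomm, norm_neg, abs_of_nonneg ht] at hC
  calc _ ≤ 2 * ‖A‖ * ‖A * exp ((-(I * t)) • (A + B)) - exp ((-(I * t)) • (A + B)) * A‖ :=
        norm_mul_sub_mul_le_two_mul _ _
    _ ≤ 2 * ‖A‖ * (t * ‖A * B - B * A‖) := by gcongr
    _ = 2 * t * ‖A‖ * ‖A * B - B * A‖ := by ring
end

section
/- Let A, B be bounded Hermitian operators. Then for all t ≥ 0: ‖[A,[A, e^{-it(A+B)}]]‖ ≤ t‖[A,[A,B]]‖ + 2t²‖A‖²‖(A+B)²‖ in operator norm. -/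
/-!
With `X = -it(A+B)`: since `⁅A, ⁅A, ·⁆⁆` kills `1` and `⁅A, A⁆ = 0`, it sends
`1 + X` to `-it ⁅A, ⁅A, B⁆⁆`, so only the Taylor remainder `exp X - 1 - X` is left to estimate.
Integrating `d/ds exp(sX) = exp(sX) X` twice bounds that remainder by `sup ‖exp(sX)‖ ‖X²‖ / 2`,
and `exp(sX)` is unitary, so the remainder is at most `t² ‖(A+B)²‖ / 2`; the double commutator
costs another factor `4‖A‖²`.
-/

open NormedSpace

attribute [local instance] LieRing.ofAssociativeRing

section ExpTaylor

variable {𝔸 : Type*} [NormedRing 𝔸] [NormedAlgebra ℝ 𝔸] [CompleteSpace 𝔸]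

theorem continuous_exp_smul_const (X : 𝔸) : Continuous fun u : ℝ => exp (u • X) :=
  continuous_iff_continuousAt.2 fun u => (hasDerivAt_exp_smul_const X u).continuousAt

theorem norm_exp_smul_mul_sub_le {X : 𝔸} {C : ℝ} (hC : ∀ s : ℝ, ‖exp (s • X)‖ ≤ C)
    {s : ℝ} (hs : 0 ≤ s) : ‖exp (s • X) * X - X‖ ≤ C * ‖X * X‖ * s := by
  have hint : ∫ r in (0 : ℝ)..s, exp (r • X) * X * X = exp (s • X) * X - X := by
    rw [intervalIntegral.integral_eq_sub_of_hasDerivAt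
      (fun r _ => (hasDerivAt_exp_smul_const X r).mul_const X)
      ((((continuous_exp_smul_const X).mul_const X).mul_const X).intervalIntegrable _ _),
      zero_smul, exp_zero, one_mul]
  have hbound (r : ℝ) : ‖exp (r • X) * X * X‖ ≤ C * ‖X * X‖ := by
    rw [mul_assoc]
    exact (norm_mul_le _ _).trans (mul_le_mul_of_nonneg_right (hC r) (norm_nonneg _))
  rw [← hint]
  calc ‖∫ r in (0 : ℝ)..s, exp (r • X) * X * X‖ ≤ C * ‖X * X‖ * |s - 0| :=
        intervalIntegral.norm_integral_le_of_norm_le_const fun r _ => hbound r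
    _ = C * ‖X * X‖ * s := by rw [sub_zero, abs_of_nonneg hs]

theorem norm_exp_sub_one_sub_le {X : 𝔸} {C : ℝ} (hC : ∀ s : ℝ, ‖exp (s • X)‖ ≤ C) :
    ‖exp X - 1 - X‖ ≤ C * ‖X * X‖ / 2 := by
  have hderiv (s : ℝ) :
      HasDerivAt (fun u : ℝ => exp (u • X) - u • X) (exp (s • X) * X - X) s := by
    have h := (hasDerivAt_exp_smul_const X s).sub ((hasDerivAt_id' s).smul_const X)
    rwa [one_smul] at h
  have hint : ∫ s in (0 : ℝ)..1, (exp (s • X) * X - X) = exp X - 1 - X := by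
    rw [intervalIntegral.integral_eq_sub_of_hasDerivAt (fun s _ => hderiv s)
      ((((continuous_exp_smul_const X).mul_const X).sub continuous_const).intervalIntegrable _ _),
      one_smul, zero_smul, exp_zero, sub_zero, sub_right_comm]
  have hC0 : 0 ≤ C := (norm_nonneg _).trans (hC 0)
  rw [← hint]
  calc ‖∫ s in (0 : ℝ)..1, (exp (s • X) * X - X)‖ ≤ |∫ s in (0 : ℝ)..1, C * ‖X * X‖ * s| := by
        refine intervalIntegral.norm_integral_le_abs_of_norm_le ?_
          ((continuous_const.mul continuous_id).intervalIntegrable _ _)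
        filter_upwards [MeasureTheory.ae_restrict_mem measurableSet_uIoc] with s hs
        rw [Set.uIoc_of_le zero_le_one] at hs
        exact norm_exp_smul_mul_sub_le hC hs.1.le
    _ = C * ‖X * X‖ / 2 := by
        rw [intervalIntegral.integral_const_mul, integral_id, abs_of_nonneg (by positivity)]
        ring

end ExpTaylor

section Commutator

variable {R : Type*} [NormedRing R]

theorem norm_lie_le (x y : R) : ‖⁅x, y⁆‖ ≤ 2 * ‖x‖ * ‖y‖ := by
  rw [Ring.lie_def]
  calc ‖x * y - y * x‖ ≤ ‖x‖ * ‖y‖ + ‖y‖ * ‖x‖ :=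
        (norm_sub_le _ _).trans (add_le_add (norm_mul_le _ _) (norm_mul_le _ _))
    _ = 2 * ‖x‖ * ‖y‖ := by ring

theorem norm_lie_lie_le (x y : R) : ‖⁅x, ⁅x, y⁆⁆‖ ≤ 4 * ‖x‖ ^ 2 * ‖y‖ :=
  calc ‖⁅x, ⁅x, y⁆⁆‖ ≤ 2 * ‖x‖ * (2 * ‖x‖ * ‖y‖) :=
        (norm_lie_le x _).trans (mul_le_mul_of_nonneg_left (norm_lie_le x y) (by positivity))
    _ = 4 * ‖x‖ ^ 2 * ‖y‖ := by ring

end Commutator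

section CStarAlgebra

variable {𝔸 : Type*} [CStarAlgebra 𝔸]

theorem norm_le_one_of_mem_unitary {u : 𝔸} (hu : u ∈ unitary 𝔸) : ‖u‖ ≤ 1 := by
  rcases subsingleton_or_nontrivial 𝔸 with _ | _
  · simp [Subsingleton.elim u 0]
  · exact (CStarRing.norm_of_mem_unitary hu).le

theorem IsSelfAdjoint.norm_exp_smul_le_one {a : 𝔸} (ha : IsSelfAdjoint a) {z : ℂ} (hz : z.re = 0) :
    ‖NormedSpace.exp (z • a)‖ ≤ 1 := by
  let +nondep : NormedAlgebra ℚ 𝔸 := .restrictScalars ℚ ℂ 𝔸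
  refine norm_le_one_of_mem_unitary <|
    exp_mem_unitary_of_mem_skewAdjoint (ha.smul_mem_skewAdjoint ?_)
  rw [skewAdjoint.mem_iff]
  apply Complex.ext <;> simp [hz]

theorem norm_lie_lie_exp_le {a b : 𝔸} (ha : IsSelfAdjoint a) (hb : IsSelfAdjoint b) {t : ℝ}
    (ht : 0 ≤ t) :
    ‖⁅a, ⁅a, exp ((-(Complex.I * t)) • (a + b))⁆⁆‖
      ≤ t * ‖⁅a, ⁅a, b⁆⁆‖ + 2 * t ^ 2 * ‖a‖ ^ 2 * ‖(a + b) * (a + b)‖ := by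
  set c : ℂ := -(Complex.I * t)
  set X := c • (a + b)
  have hc : ‖c‖ = t := by simp [c, abs_of_nonneg ht]
  have hX : ‖X * X‖ = t ^ 2 * ‖(a + b) * (a + b)‖ := by
    rw [smul_mul_smul_comm, norm_smul, norm_mul, hc, sq]
  have hunitary (s : ℝ) : ‖exp (s • X)‖ ≤ 1 := by
    rw [← smul_one_smul ℂ s X, smul_smul]
    exact (ha.add hb).norm_exp_smul_le_one (by simp [c])
  have hsplit : ⁅a, ⁅a, exp X⁆⁆ = c • ⁅a, ⁅a, b⁆⁆ + ⁅a, ⁅a, exp X - 1 - X⁆⁆ := by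
    simp only [X, lie_sub, lie_smul, lie_add, lie_self, (Commute.one_right a).lie_eq,
      sub_zero, zero_add]
    abel
  calc ‖⁅a, ⁅a, exp X⁆⁆‖
      ≤ t * ‖⁅a, ⁅a, b⁆⁆‖ + 4 * ‖a‖ ^ 2 * ‖exp X - 1 - X‖ := by
        rw [hsplit, ← hc, ← norm_smul]
        exact (norm_add_le _ _).trans (add_le_add le_rfl (norm_lie_lie_le _ _))
    _ ≤ t * ‖⁅a, ⁅a, b⁆⁆‖ + 4 * ‖a‖ ^ 2 * (1 * ‖X * X‖ / 2) := by
        gcongr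
        exact norm_exp_sub_one_sub_le hunitary
    _ = t * ‖⁅a, ⁅a, b⁆⁆‖ + 2 * t ^ 2 * ‖a‖ ^ 2 * ‖(a + b) * (a + b)‖ := by
        rw [hX]; ring

end CStarAlgebra

/-- `‖[A,[A, e^{-it(A+B)}]]‖ ≤ t‖[A,[A,B]]‖ + 2t²‖A‖²‖(A+B)²‖` for all `t ≥ 0`. -/
theorem stmt11 {E : Type*} [NormedAddCommGroup E] [InnerProductSpace ℂ E] [CompleteSpace E]
    (A B : E →L[ℂ] E) (hA : IsSelfAdjoint A) (hB : IsSelfAdjoint B)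
    (t : ℝ) (ht : 0 ≤ t) :
    ‖A * (A * NormedSpace.exp ((-(Complex.I * t)) • (A + B))
            - NormedSpace.exp ((-(Complex.I * t)) • (A + B)) * A)
        - (A * NormedSpace.exp ((-(Complex.I * t)) • (A + B))
            - NormedSpace.exp ((-(Complex.I * t)) • (A + B)) * A) * A‖
      ≤ t * ‖A * (A * B - B * A) - (A * B - B * A) * A‖
          + 2 * t ^ 2 * ‖A‖ ^ 2 * ‖(A + B) * (A + B)‖ := by
  simpa only [Ring.lie_def] using norm_lie_lie_exp_le hA hB ht
end

section
/- Let A, B be bounded Hermitian operators with b_n(t) = ‖(e^{-i(t/n)A} e^{-i(t/n)B})^n - e^{-it(A+B)}‖. Then for all 0 ≤ t ≤ 2n/‖A‖: b_n(t) ≥ (t²/2n)(1 - (t/2n)‖A‖)(‖[A,B]‖ - (t/2)‖[A+B,[A,B]]‖) - (t³/24n²)‖[A,[A,B]]‖ - (t³/12n²)‖[B,[B,A]]‖. -/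
/-!
Put `θ = t/n`, `H = A + B`, `W = e^{-itH}`, `v = e^{-iθA/2}`. Since
`e^{-iθA} e^{-iθB} = v S v*` for the symmetric (Strang) step `S = e^{-iθA/2} e^{-iθB} e^{-iθA/2}`,
the Trotter product is `v Sⁿ v*`, so `bₙ(t) ≥ ‖W - v* W v‖ - ‖Sⁿ - W‖`.

The first term is the norm of the commutator of the unitaries `v` and `W`, that is
`‖e^{-iθA/2} - e^{-iθA(t)/2}‖` with `A(t) = W A W*` the Heisenberg-evolved `A`. Duhamel's formula
bounds it below by `(θ/2) ‖A(t) - A‖ (1 - (θ/2)‖A‖)`, and the second-order Taylor expansion of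
`A(t)` gives `‖A(t) - A‖ ≥ t ‖[A,B]‖ - (t²/2) ‖[H,[A,B]]‖`.

The second term is at most `n` times the one-step error `‖S - e^{-iθH}‖`. The curve `S(s)` solves
`S' = -i G(s) S`, where `G(s) - H` is a difference of two Taylor remainders of Heisenberg
evolutions, hence `O(s²)`; integrating `(e^{isH} S(s))'` yields the second-order bound.
-/

open Complex NormedSpace Set

section CStarRing

variable {R : Type*} [NormedRing R] [StarRing R] [CStarRing R]

lemma norm_pow_sub_pow_le_of_mem_unitary {u v : R} (hu : u ∈ unitary R) (hv : v ∈ unitary R)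
    (n : ℕ) : ‖u ^ n - v ^ n‖ ≤ n * ‖u - v‖ := by
  induction n with
  | zero => simp
  | succ k ih =>
    calc ‖u ^ (k + 1) - v ^ (k + 1)‖ = ‖u ^ k * (u - v) + (u ^ k - v ^ k) * v‖ := by
          rw [pow_succ, pow_succ]; noncomm_ring
      _ ≤ ‖u - v‖ + k * ‖u - v‖ := by
          refine (norm_add_le _ _).trans (add_le_add ?_ ?_)
          · rw [CStarRing.norm_mem_unitary_mul _ (pow_mem hu k)]
          · rw [CStarRing.norm_mul_mem_unitary _ hv]; exact ih
      _ = (k + 1 : ℕ) * ‖u - v‖ := by push_cast; ring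

end CStarRing

section BanachAlgebra

variable {𝔸 : Type*} [NormedRing 𝔸] [NormedAlgebra ℂ 𝔸]

noncomputable def propagator (X : 𝔸) (s : ℝ) : 𝔸 := exp ((-(I * s)) • X)

variable (X : 𝔸)

@[simp] lemma propagator_zero : propagator X 0 = 1 := by simp [propagator]

lemma propagator_neg (s : ℝ) : propagator (-X) s = propagator X (-s) := by
  simp [propagator]

lemma propagator_smul (r s : ℝ) : propagator ((r : ℂ) • X) s = propagator X (r * s) := by
  simp only [propagator, smul_smul]
  push_cast; ring_nf

lemma commute_propagator (s : ℝ) : Commute X (propagator X s) :=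
  ((Commute.refl X).smul_right _).exp_right

variable [CompleteSpace 𝔸]

lemma propagator_add (s r : ℝ) : propagator X (s + r) = propagator X s * propagator X r := by
  let +nondep : NormedAlgebra ℚ 𝔸 := .restrictScalars ℚ ℂ 𝔸
  simp only [propagator, ← exp_add_of_commute ((Commute.refl X).smul_left _ |>.smul_right _),
    ← add_smul]
  push_cast; ring_nf

lemma propagator_mul_propagator_neg (s : ℝ) : propagator X s * propagator X (-s) = 1 := by
  rw [← propagator_add, add_neg_cancel, propagator_zero]

lemma propagator_neg_mul_propagator (s : ℝ) : propagator X (-s) * propagator X s = 1 := by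
  rw [← propagator_add, neg_add_cancel, propagator_zero]

lemma propagator_neg_mul_propagator_mul (s : ℝ) (C : 𝔸) :
    propagator X (-s) * (propagator X s * C) = C := by
  rw [← mul_assoc, propagator_neg_mul_propagator, one_mul]

lemma propagator_pow (s : ℝ) (n : ℕ) : propagator X s ^ n = propagator X (n * s) := by
  induction n with
  | zero => simp
  | succ k ih => rw [pow_succ, ih, ← propagator_add]; push_cast; ring_nf

lemma hasDerivAt_propagator (s : ℝ) :
    HasDerivAt (propagator X) ((-I) • X * propagator X s) s := by
  have : propagator X = fun s : ℝ ↦ exp (s • ((-I) • X)) := by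
    ext s
    rw [propagator, ← Complex.coe_smul, smul_smul]
    ring_nf
  rw [this]
  exact hasDerivAt_exp_smul_const' ((-I) • X) s

lemma hasDerivAt_propagator_mul_propagator_sub (Y : 𝔸) (τ s : ℝ) :
    HasDerivAt (fun s ↦ propagator X s * propagator Y (τ - s))
      ((-I) • (propagator X s * (X - Y) * propagator Y (τ - s))) s := by
  have hY := (hasDerivAt_propagator Y (τ - s)).scomp s ((hasDerivAt_id s).const_sub τ)
  convert (hasDerivAt_propagator X s).mul hY using 1
  · rfl
  simp only [Function.comp_apply, one_smul, neg_mul, mul_sub, sub_mul, smul_sub, neg_smul,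
    smul_mul_assoc, mul_smul_comm, mul_neg, mul_assoc, (commute_propagator X s).left_comm]
  abel

noncomputable def propagatorUnit (s : ℝ) : 𝔸ˣ :=
  ⟨propagator X s, propagator X (-s), propagator_mul_propagator_neg X s,
    propagator_neg_mul_propagator X s⟩

noncomputable def heisenberg (s : ℝ) : 𝔸 ≃ₐ[ℂ] 𝔸 :=
  MulSemiringAction.toAlgEquiv ℂ 𝔸 (ConjAct.toConjAct (propagatorUnit X s))

lemma heisenberg_apply (s : ℝ) (C : 𝔸) :
    heisenberg X s C = propagator X s * C * propagator X (-s) := by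
  simp [heisenberg, ConjAct.units_smul_def, propagatorUnit]

@[simp] lemma heisenberg_zero (C : 𝔸) : heisenberg X 0 C = C := by
  simp [heisenberg_apply]

lemma heisenberg_self (s : ℝ) : heisenberg X s X = X := by
  rw [heisenberg_apply, ← (commute_propagator X s).eq, mul_assoc, propagator_mul_propagator_neg,
    mul_one]

lemma heisenberg_neg (s : ℝ) (C : 𝔸) : heisenberg (-X) s C = heisenberg X (-s) C := by
  simp [heisenberg_apply, propagator_neg]

lemma heisenberg_heisenberg (s r : ℝ) (C : 𝔸) :
    heisenberg X s (heisenberg X r C) = heisenberg X (s + r) C := by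
  rw [heisenberg_apply, heisenberg_apply, heisenberg_apply, propagator_add,
    show -(s + r) = -r + -s by ring, propagator_add]
  simp only [mul_assoc]

lemma heisenberg_lie (s : ℝ) (C : 𝔸) : heisenberg X s ⁅X, C⁆ = ⁅X, heisenberg X s C⁆ := by
  simp only [Ring.lie_def, map_sub, map_mul, heisenberg_self]

lemma heisenberg_propagator (H : 𝔸) (t r : ℝ) :
    heisenberg H t (propagator X r) = propagator (heisenberg H t X) r := by
  let +nondep : NormedAlgebra ℚ 𝔸 := .restrictScalars ℚ ℂ 𝔸
  have h := exp_units_conj (propagatorUnit H t) ((-(I * r)) • X)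
  rw [mul_smul_comm, smul_mul_assoc] at h
  rw [heisenberg_apply, heisenberg_apply]
  exact h.symm

lemma hasDerivAt_heisenberg (s : ℝ) (C : 𝔸) :
    HasDerivAt (fun s ↦ heisenberg X s C) ((-I) • ⁅X, heisenberg X s C⁆) s := by
  have h := ((hasDerivAt_propagator X s).mul_const C).mul (hasDerivAt_propagator (-X) s)
  convert h using 1
  · ext r; simp only [Pi.mul_apply, heisenberg_apply, propagator_neg]
  · simp only [heisenberg_apply, Ring.lie_def, propagator_neg, smul_sub, smul_mul_assoc,
      mul_smul_comm, mul_assoc, smul_neg, neg_mul, mul_neg, neg_smul]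
    rw [(commute_propagator X (-s)).eq]
    abel

noncomputable def heisenbergRemainder (τ : ℝ) (C : 𝔸) : 𝔸 :=
  heisenberg X τ C - C + (I * τ) • ⁅X, C⁆

lemma heisenbergRemainder_neg (τ : ℝ) (C : 𝔸) :
    heisenbergRemainder (-X) (-τ) C = heisenbergRemainder X τ C := by
  simp [heisenbergRemainder, heisenberg_neg, Ring.lie_def, sub_eq_add_neg]

variable (A B : 𝔸)

noncomputable def strangStep (s : ℝ) : 𝔸 :=
  propagator A (s / 2) * propagator B s * propagator A (s / 2)

noncomputable def strangGenerator (s : ℝ) : 𝔸 :=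
  (2⁻¹ : ℂ) • A + heisenberg A (s / 2) (B + heisenberg B s ((2⁻¹ : ℂ) • A))

lemma propagator_mul_propagator_eq_heisenberg_strangStep (s : ℝ) :
    propagator A s * propagator B s = heisenberg A (s / 2) (strangStep A B s) := by
  simp only [heisenberg_apply, strangStep, mul_assoc, propagator_mul_propagator_neg, mul_one]
  rw [← mul_assoc, ← propagator_add, add_halves]

lemma hasDerivAt_strangStep (s : ℝ) :
    HasDerivAt (strangStep A B) ((-I) • strangGenerator A B s * strangStep A B s) s := by
  have half : propagator ((2⁻¹ : ℂ) • A) = fun s ↦ propagator A (s / 2) := by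
    ext s
    rw [show (2⁻¹ : ℂ) = ((2⁻¹ : ℝ) : ℂ) by push_cast; rfl, propagator_smul, inv_mul_eq_div]
  have hA := hasDerivAt_propagator ((2⁻¹ : ℂ) • A) s
  rw [half] at hA
  convert (hA.mul (hasDerivAt_propagator B s)).mul hA using 1
  · ext r; simp only [strangStep, Pi.mul_apply]
  simp only [strangStep, strangGenerator, heisenberg_apply, add_mul, mul_add, smul_add,
    smul_mul_assoc, mul_smul_comm, mul_assoc, propagator_neg_mul_propagator_mul, Pi.mul_apply,
    add_assoc]

lemma hasDerivAt_propagator_neg_mul_strangStep (s : ℝ) :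
    HasDerivAt (fun s ↦ propagator (A + B) (-s) * strangStep A B s)
      (I • (propagator (A + B) (-s) * ((A + B - strangGenerator A B s) * strangStep A B s))) s := by
  convert (hasDerivAt_propagator (-(A + B)) s).mul (hasDerivAt_strangStep A B s) using 1
  · ext r; simp only [Pi.mul_apply, propagator_neg]
  · have hc : (A + B) * (propagator (A + B) (-s) * strangStep A B s) =
        propagator (A + B) (-s) * ((A + B) * strangStep A B s) := by
      rw [← mul_assoc, (commute_propagator _ _).eq, mul_assoc]
    simp only [propagator_neg, sub_mul, mul_sub, smul_sub, smul_mul_assoc, mul_smul_comm,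
      mul_assoc, neg_smul, smul_neg, neg_mul, mul_neg, neg_neg, hc]
    abel

lemma add_sub_strangGenerator (s : ℝ) :
    A + B - strangGenerator A B s = heisenberg A (s / 2)
      (heisenbergRemainder A (-(s / 2)) B - heisenbergRemainder B s ((2⁻¹ : ℂ) • A)) := by
  simp only [strangGenerator, heisenbergRemainder, map_sub, map_add, map_smul,
    heisenberg_heisenberg, add_neg_cancel, heisenberg_zero, heisenberg_self, Ring.lie_def,
    mul_smul_comm, smul_mul_assoc]
  push_cast
  module

end BanachAlgebra

section CStarAlgebra

variable {𝔸 : Type*} [CStarAlgebra 𝔸] {X : 𝔸}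

lemma propagator_mem_unitary (hX : IsSelfAdjoint X) (s : ℝ) : propagator X s ∈ unitary 𝔸 :=
  let +nondep : NormedAlgebra ℚ 𝔸 := .restrictScalars ℚ ℂ 𝔸
  exp_mem_unitary_of_mem_skewAdjoint (hX.smul_mem_skewAdjoint (by simp [skewAdjoint.mem_iff]))

lemma norm_propagator_mul (hX : IsSelfAdjoint X) (s : ℝ) (C : 𝔸) :
    ‖propagator X s * C‖ = ‖C‖ :=
  CStarRing.norm_mem_unitary_mul C (propagator_mem_unitary hX s)

lemma norm_mul_propagator (hX : IsSelfAdjoint X) (s : ℝ) (C : 𝔸) :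
    ‖C * propagator X s‖ = ‖C‖ :=
  CStarRing.norm_mul_mem_unitary C (propagator_mem_unitary hX s)

lemma star_propagator (hX : IsSelfAdjoint X) (s : ℝ) :
    star (propagator X s) = propagator X (-s) := by
  rw [← mul_one (star _), ← propagator_mul_propagator_neg X s, ← mul_assoc,
    Unitary.star_mul_self_of_mem (propagator_mem_unitary hX s), one_mul]

lemma IsSelfAdjoint.heisenberg {C : 𝔸} (hX : IsSelfAdjoint X) (hC : IsSelfAdjoint C) (s : ℝ) :
    IsSelfAdjoint (heisenberg X s C) := by
  simpa only [heisenberg_apply, star_propagator hX] using hC.conjugate (propagator X s)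

lemma norm_heisenberg (hX : IsSelfAdjoint X) (s : ℝ) (C : 𝔸) : ‖heisenberg X s C‖ = ‖C‖ := by
  rw [heisenberg_apply, norm_mul_propagator hX, norm_propagator_mul hX]

lemma norm_sub_heisenberg (hX : IsSelfAdjoint X) (s : ℝ) (C : 𝔸) :
    ‖C - heisenberg X s C‖ = ‖C * propagator X s - propagator X s * C‖ := by
  rw [← norm_mul_propagator hX s, heisenberg_apply, sub_mul, mul_assoc _ (propagator X (-s)),
    propagator_neg_mul_propagator, mul_one]

lemma norm_propagator_sub_one_le (hX : IsSelfAdjoint X) (s : ℝ) :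
    ‖propagator X s - 1‖ ≤ |s| * ‖X‖ := by
  have h := Convex.norm_image_sub_le_of_norm_hasDerivWithin_le
    (fun r _ ↦ (hasDerivAt_propagator X r).hasDerivWithinAt) (fun r _ ↦ ?_) convex_univ
    (mem_univ 0) (mem_univ s) (C := ‖X‖)
  · simpa [mul_comm] using h
  · rw [norm_mul_propagator hX, norm_smul, norm_neg, norm_I, one_mul]

lemma norm_heisenberg_sub_le (hX : IsSelfAdjoint X) (s : ℝ) (C : 𝔸) :
    ‖heisenberg X s C - C‖ ≤ |s| * ‖⁅X, C⁆‖ := by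
  have h := Convex.norm_image_sub_le_of_norm_hasDerivWithin_le
    (fun r _ ↦ (hasDerivAt_heisenberg X r C).hasDerivWithinAt) (fun r _ ↦ ?_) convex_univ
    (mem_univ 0) (mem_univ s) (C := ‖⁅X, C⁆‖)
  · simpa [mul_comm] using h
  · rw [← heisenberg_lie, norm_smul, norm_neg, norm_I, one_mul, norm_heisenberg hX]

lemma norm_heisenbergRemainder_le_of_nonneg (hX : IsSelfAdjoint X) (C : 𝔸) {τ : ℝ}
    (hτ : 0 ≤ τ) : ‖heisenbergRemainder X τ C‖ ≤ τ ^ 2 / 2 * ‖⁅X, ⁅X, C⁆⁆‖ := by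
  have hR (r : ℝ) := ((hasDerivAt_heisenberg X r C).sub_const C).add
    (((hasDerivAt_id r).ofReal_comp.const_mul I).smul_const ⁅X, C⁆)
  have hB (r : ℝ) : HasDerivAt (fun r ↦ r ^ 2 / 2 * ‖⁅X, ⁅X, C⁆⁆‖) (r * ‖⁅X, ⁅X, C⁆⁆‖) r :=
    ((hasDerivAt_pow 2 r).div_const 2 |>.mul_const _).congr_deriv (by ring)
  refine image_norm_le_of_norm_deriv_right_le_deriv_boundary (a := 0) (b := τ)
    (fun r _ ↦ (hR r).continuousAt.continuousWithinAt) (fun r _ ↦ (hR r).hasDerivWithinAt)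
    (by simp) hB (fun r hr ↦ ?_) ⟨hτ, le_rfl⟩
  calc _ = ‖heisenberg X r ⁅X, C⁆ - ⁅X, C⁆‖ := by
        rw [← heisenberg_lie, ofReal_one, mul_one,
          show ∀ a b : 𝔸, -I • a + I • b = (-I) • (a - b) from fun a b ↦ by module,
          norm_smul, norm_neg, norm_I, one_mul]
    _ ≤ |r| * ‖⁅X, ⁅X, C⁆⁆‖ := norm_heisenberg_sub_le hX r _
    _ = r * ‖⁅X, ⁅X, C⁆⁆‖ := by rw [abs_of_nonneg hr.1]

lemma norm_heisenbergRemainder_le (hX : IsSelfAdjoint X) (τ : ℝ) (C : 𝔸) :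
    ‖heisenbergRemainder X τ C‖ ≤ τ ^ 2 / 2 * ‖⁅X, ⁅X, C⁆⁆‖ := by
  rcases le_total 0 τ with hτ | hτ
  · exact norm_heisenbergRemainder_le_of_nonneg hX C hτ
  · have h := norm_heisenbergRemainder_le_of_nonneg hX.neg C (neg_nonneg.2 hτ)
    have e : ⁅-X, ⁅-X, C⁆⁆ = ⁅X, ⁅X, C⁆⁆ := by simp only [Ring.lie_def]; noncomm_ring
    rwa [heisenbergRemainder_neg, e, neg_sq] at h

lemma le_norm_heisenberg_sub (hX : IsSelfAdjoint X) (t : ℝ) (C : 𝔸) :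
    |t| * ‖⁅X, C⁆‖ - t ^ 2 / 2 * ‖⁅X, ⁅X, C⁆⁆‖ ≤ ‖heisenberg X t C - C‖ := by
  have hR := norm_heisenbergRemainder_le hX t C
  have h := norm_sub_le (heisenberg X t C - C) (heisenbergRemainder X t C)
  rw [heisenbergRemainder] at h hR
  rw [sub_add_cancel_left, norm_neg, norm_smul, norm_mul, norm_I, norm_real, Real.norm_eq_abs,
    one_mul] at h
  linarith

lemma norm_propagator_mul_mul_propagator_sub_le {Y : 𝔸} (hX : IsSelfAdjoint X)
    (hY : IsSelfAdjoint Y) {a s r : ℝ} (hXa : ‖X‖ ≤ a) (hYa : ‖Y‖ ≤ a) (hs : 0 ≤ s) (hr : 0 ≤ r)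
    (C : 𝔸) : ‖propagator X s * C * propagator Y r - C‖ ≤ (s + r) * a * ‖C‖ := by
  have h₁ := norm_propagator_sub_one_le hX s
  have h₂ := norm_propagator_sub_one_le hY r
  rw [abs_of_nonneg hs] at h₁
  rw [abs_of_nonneg hr] at h₂
  calc _ = ‖(propagator X s - 1) * (C * propagator Y r) + C * (propagator Y r - 1)‖ := by
        congr 1; noncomm_ring
    _ ≤ ‖propagator X s - 1‖ * ‖C‖ + ‖C‖ * ‖propagator Y r - 1‖ := by
        refine (norm_add_le _ _).trans (add_le_add ((norm_mul_le _ _).trans_eq ?_) (norm_mul_le _ _))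
        rw [norm_mul_propagator hY]
    _ ≤ s * a * ‖C‖ + ‖C‖ * (r * a) := by
        gcongr
        · exact h₁.trans (by gcongr)
        · exact h₂.trans (by gcongr)
    _ = (s + r) * a * ‖C‖ := by ring

lemma le_norm_propagator_sub_propagator {Y : 𝔸} (hX : IsSelfAdjoint X) (hY : IsSelfAdjoint Y)
    {a τ : ℝ} (hXa : ‖X‖ ≤ a) (hYa : ‖Y‖ ≤ a) (hτ : 0 ≤ τ) :
    τ * ‖X - Y‖ * (1 - τ * a) ≤ ‖propagator X τ - propagator Y τ‖ := by
  have hg (s : ℝ) := (hasDerivAt_propagator_mul_propagator_sub X Y τ s).add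
    (((hasDerivAt_id s).ofReal_comp.const_mul I).smul_const (X - Y))
  have bound : ∀ s ∈ Icc 0 τ, ‖(-I) • (propagator X s * (X - Y) * propagator Y (τ - s)) +
      (I * (1 : ℝ)) • (X - Y)‖ ≤ τ * a * ‖X - Y‖ := by
    intro s hs
    rw [ofReal_one, mul_one, show ∀ u v : 𝔸, -I • u + I • v = (-I) • (u - v) from
      fun u v ↦ by module, norm_smul, norm_neg, norm_I, one_mul]
    convert norm_propagator_mul_mul_propagator_sub_le hX hY hXa hYa hs.1 (sub_nonneg.2 hs.2)
      (X - Y) using 2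
    ring
  have h := Convex.norm_image_sub_le_of_norm_hasDerivWithin_le
    (fun s _ ↦ (hg s).hasDerivWithinAt) bound (convex_Icc 0 τ) (left_mem_Icc.2 hτ)
    (right_mem_Icc.2 hτ)
  simp only [Pi.add_apply, id, sub_self, sub_zero, propagator_zero, mul_one, one_mul,
    ofReal_zero, mul_zero, zero_smul, add_zero, Real.norm_eq_abs, abs_of_nonneg hτ,
    add_sub_right_comm] at h
  have h' := norm_sub_le (propagator X τ - propagator Y τ + (I * τ) • (X - Y))
    (propagator X τ - propagator Y τ)
  rw [add_sub_cancel_left, norm_smul, norm_mul, norm_I, norm_real, Real.norm_eq_abs,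
    abs_of_nonneg hτ, one_mul] at h'
  linarith

variable {A B H : 𝔸}

lemma norm_propagator_sub_propagator_heisenberg_le (hA : IsSelfAdjoint A) (hH : IsSelfAdjoint H)
    (τ t : ℝ) (V : 𝔸) : ‖propagator A τ - propagator (heisenberg H t A) τ‖ ≤
      ‖heisenberg A τ V - propagator H t‖ + ‖V - propagator H t‖ := by
  set W := propagator H t
  have hcomm : ‖W - heisenberg A τ W‖ = ‖propagator A τ - propagator (heisenberg H t A) τ‖ := by
    rw [norm_sub_heisenberg hA, norm_sub_rev, ← norm_sub_heisenberg hH, heisenberg_propagator]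
  have h := norm_sub_le (heisenberg A τ V - W) (heisenberg A τ (V - W))
  rw [map_sub, sub_sub_sub_cancel_left, norm_sub_rev, hcomm, ← map_sub, norm_heisenberg hA] at h
  exact h

lemma norm_add_sub_strangGenerator_le (hA : IsSelfAdjoint A) (hB : IsSelfAdjoint B) (s : ℝ) :
    ‖A + B - strangGenerator A B s‖ ≤ s ^ 2 / 8 * ‖⁅A, ⁅A, B⁆⁆‖ + s ^ 2 / 4 * ‖⁅B, ⁅B, A⁆⁆‖ := by
  have hBA : ⁅B, ⁅B, (2⁻¹ : ℂ) • A⁆⁆ = (2⁻¹ : ℂ) • ⁅B, ⁅B, A⁆⁆ := by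
    simp only [Ring.lie_def, smul_sub, mul_sub, sub_mul, mul_smul_comm, smul_mul_assoc]
  have hA' := norm_heisenbergRemainder_le hA (-(s / 2)) B
  have hB' := norm_heisenbergRemainder_le hB s ((2⁻¹ : ℂ) • A)
  rw [hBA, norm_smul] at hB'
  rw [add_sub_strangGenerator, norm_heisenberg hA]
  refine (norm_sub_le _ _).trans (le_of_le_of_eq (add_le_add hA' hB') ?_)
  norm_num
  ring

lemma strangStep_mem_unitary (hA : IsSelfAdjoint A) (hB : IsSelfAdjoint B) (s : ℝ) :
    strangStep A B s ∈ unitary 𝔸 :=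
  mul_mem (mul_mem (propagator_mem_unitary hA _) (propagator_mem_unitary hB _))
    (propagator_mem_unitary hA _)

lemma norm_strangStep_sub_propagator_le (hA : IsSelfAdjoint A) (hB : IsSelfAdjoint B) {θ : ℝ}
    (hθ : 0 ≤ θ) : ‖strangStep A B θ - propagator (A + B) θ‖ ≤
      θ ^ 3 / 24 * ‖⁅A, ⁅A, B⁆⁆‖ + θ ^ 3 / 12 * ‖⁅B, ⁅B, A⁆⁆‖ := by
  set c₁ := ‖⁅A, ⁅A, B⁆⁆‖
  set c₂ := ‖⁅B, ⁅B, A⁆⁆‖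
  have hF (s : ℝ) := (hasDerivAt_propagator_neg_mul_strangStep A B s).sub_const 1
  have hBound (s : ℝ) : HasDerivAt (fun s ↦ s ^ 3 / 24 * c₁ + s ^ 3 / 12 * c₂)
      (s ^ 2 / 8 * c₁ + s ^ 2 / 4 * c₂) s :=
    (((hasDerivAt_pow 3 s).div_const 24 |>.mul_const c₁).add
      ((hasDerivAt_pow 3 s).div_const 12 |>.mul_const c₂)).congr_deriv (by ring)
  have h := image_norm_le_of_norm_deriv_right_le_deriv_boundary (a := 0) (b := θ)
    (fun s _ ↦ (hF s).continuousAt.continuousWithinAt) (fun s _ ↦ (hF s).hasDerivWithinAt)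
    (by simp [strangStep]) hBound (fun s _ ↦ ?_) ⟨hθ, le_rfl⟩
  · rwa [← norm_propagator_mul (hA.add hB) (-θ), mul_sub, propagator_neg_mul_propagator]
  · rw [norm_smul, norm_I, one_mul, norm_propagator_mul (hA.add hB),
      CStarRing.norm_mul_mem_unitary _ (strangStep_mem_unitary hA hB s)]
    exact norm_add_sub_strangGenerator_le hA hB s

lemma norm_strangStep_pow_sub_propagator_le (hA : IsSelfAdjoint A) (hB : IsSelfAdjoint B)
    {θ : ℝ} (hθ : 0 ≤ θ) (n : ℕ) : ‖strangStep A B θ ^ n - propagator (A + B) (n * θ)‖ ≤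
      n * (θ ^ 3 / 24 * ‖⁅A, ⁅A, B⁆⁆‖ + θ ^ 3 / 12 * ‖⁅B, ⁅B, A⁆⁆‖) := by
  rw [← propagator_pow]
  refine (norm_pow_sub_pow_le_of_mem_unitary (strangStep_mem_unitary hA hB θ)
    (propagator_mem_unitary (hA.add hB) θ) n).trans ?_
  gcongr
  exact norm_strangStep_sub_propagator_le hA hB hθ

theorem le_norm_trotter_sub_propagator (hA : IsSelfAdjoint A) (hB : IsSelfAdjoint B) {n : ℕ}
    (hn : 0 < n) {t : ℝ} (ht : 0 ≤ t) (ht' : t * ‖A‖ ≤ 2 * n) :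
    t ^ 2 / (2 * n) * (1 - t / (2 * n) * ‖A‖) * (‖⁅A, B⁆‖ - t / 2 * ‖⁅A + B, ⁅A, B⁆⁆‖)
      - t ^ 3 / (24 * n ^ 2) * ‖⁅A, ⁅A, B⁆⁆‖ - t ^ 3 / (12 * n ^ 2) * ‖⁅B, ⁅B, A⁆⁆‖
      ≤ ‖(propagator A (t / n) * propagator B (t / n)) ^ n - propagator (A + B) t‖ := by
  have hn' : (0 : ℝ) < n := Nat.cast_pos.2 hn
  set θ := t / n with hθ_def
  have hθ : 0 ≤ θ := by positivity
  have hH := hA.add hB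
  have hκ : 0 ≤ 1 - θ / 2 * ‖A‖ := by
    rw [sub_nonneg, show θ / 2 * ‖A‖ = t * ‖A‖ / (2 * n) by ring, div_le_one (by positivity)]
    exact ht'
  have hcomm := norm_propagator_sub_propagator_heisenberg_le hA hH (θ / 2) t (strangStep A B θ ^ n)
  have hlow := (le_norm_propagator_sub_propagator (hH.heisenberg hA t) hA
    (norm_heisenberg hH t A).le le_rfl (by positivity : 0 ≤ θ / 2)).trans_eq (norm_sub_rev _ _)
  have hevol : t * ‖⁅A, B⁆‖ - t ^ 2 / 2 * ‖⁅A + B, ⁅A, B⁆⁆‖ ≤ ‖heisenberg (A + B) t A - A‖ := by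
    have e₁ : ⁅A + B, A⁆ = -⁅A, B⁆ := by simp only [Ring.lie_def]; noncomm_ring
    have e₂ : ⁅A + B, ⁅A + B, A⁆⁆ = -⁅A + B, ⁅A, B⁆⁆ := by simp only [Ring.lie_def]; noncomm_ring
    have h := le_norm_heisenberg_sub hH t A
    rwa [e₂, e₁, norm_neg, norm_neg, abs_of_nonneg ht] at h
  have hstep := norm_strangStep_pow_sub_propagator_le hA hB hθ n
  rw [show (n : ℝ) * θ = t by rw [hθ_def]; field_simp] at hstep
  have e : t ^ 2 / (2 * n) = θ / 2 * t ∧ t / (2 * n) = θ / 2 ∧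
      t ^ 3 / (24 * n ^ 2) = n * (θ ^ 3 / 24) ∧ t ^ 3 / (12 * n ^ 2) = n * (θ ^ 3 / 12) := by
    refine ⟨?_, ?_, ?_, ?_⟩ <;> rw [hθ_def] <;> field_simp
  rw [e.1, e.2.1, e.2.2.1, e.2.2.2, propagator_mul_propagator_eq_heisenberg_strangStep, ← map_pow]
  nlinarith [mul_le_mul_of_nonneg_left hevol (mul_nonneg (by positivity : 0 ≤ θ / 2) hκ)]

end CStarAlgebra

/-- Lower bound on the norm Trotter error: for `0 ≤ t ≤ 2n/‖A‖`,
`bₙ(t) ≥ (t²/2n)(1 - (t/2n)‖A‖)(‖[A,B]‖ - (t/2)‖[A+B,[A,B]]‖)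
  - (t³/24n²)‖[A,[A,B]]‖ - (t³/12n²)‖[B,[B,A]]‖`. -/
theorem stmt12 {E : Type*} [NormedAddCommGroup E] [InnerProductSpace ℂ E] [CompleteSpace E]
    (A B : E →L[ℂ] E) (hA : IsSelfAdjoint A) (hB : IsSelfAdjoint B)
    (n : ℕ) (hn : 1 ≤ n) (t : ℝ) (ht : 0 ≤ t) (ht' : t * ‖A‖ ≤ 2 * n) :
    t ^ 2 / (2 * n) * (1 - t / (2 * n) * ‖A‖)
        * (‖A * B - B * A‖
            - t / 2 * ‖(A + B) * (A * B - B * A) - (A * B - B * A) * (A + B)‖)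
      - t ^ 3 / (24 * n ^ 2) * ‖A * (A * B - B * A) - (A * B - B * A) * A‖
      - t ^ 3 / (12 * n ^ 2) * ‖B * (B * A - A * B) - (B * A - A * B) * B‖
      ≤ ‖(NormedSpace.exp ((-(Complex.I * (t / n))) • A)
            * NormedSpace.exp ((-(Complex.I * (t / n))) • B)) ^ n
          - NormedSpace.exp ((-(Complex.I * t)) • (A + B))‖ := by
  have h := le_norm_trotter_sub_propagator hA hB hn ht ht'
  simp only [propagator, Ring.lie_def] at h
  push_cast at h
  exact h
end

section
/- Let H be the XX-chain Hamiltonian H = (J/4)Σ_{j=0}^{L-1}(X_j X_{j+1} + Y_j Y_{j+1}) with periodic boundary conditions on L ≥ 2 qubits, and let A = (J/4)Σ_j X_j X_{j+1}, B = (J/4)Σ_j Y_j Y_{j+1}. Then [A,B] = (iJ²/8) Σ_{j=0}^{L-1} (X_j Y_{j+2} + Y_j X_{j+2}) Z_{j+1}. -/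
open Complex
open scoped BigOperators

noncomputable section

/-- The Pauli matrix `X`. -/
def PauliX : Matrix (Fin 2) (Fin 2) ℂ := !![0, 1; 1, 0]

/-- The Pauli matrix `Y`. -/
def PauliY : Matrix (Fin 2) (Fin 2) ℂ := !![0, -Complex.I; Complex.I, 0]

/-- The Pauli matrix `Z`. -/
def PauliZ : Matrix (Fin 2) (Fin 2) ℂ := !![1, 0; 0, -1]

/-- The single-site operator `M` acting on site `j` of a chain of `L` qubits
(tensored with the identity on all other sites). -/
def siteOp (L : ℕ) (M : Matrix (Fin 2) (Fin 2) ℂ) (j : Fin L) :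
    Matrix (Fin L → Fin 2) (Fin L → Fin 2) ℂ :=
  Matrix.of fun v w =>
    M (v j) (w j) * ∏ i ∈ Finset.univ.erase j, (if v i = w i then (1 : ℂ) else 0)


lemma siteOp_apply {L : ℕ} (M : Matrix (Fin 2) (Fin 2) ℂ) (j : Fin L) (v w : Fin L → Fin 2) :
    siteOp L M j v w = M (v j) (w j) * if ∀ i, i ≠ j → v i = w i then 1 else 0 := by
  unfold siteOp
  rw [Matrix.of_apply, Finset.prod_boole]
  congr 1
  simp [Finset.mem_erase]

lemma siteOp_smul {L : ℕ} (c : ℂ) (M : Matrix (Fin 2) (Fin 2) ℂ) (j : Fin L) :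
    siteOp L (c • M) j = c • siteOp L M j := by
  ext v w
  simp [siteOp_apply, Matrix.smul_apply, mul_assoc]

lemma siteOp_mul_same {L : ℕ} (M N : Matrix (Fin 2) (Fin 2) ℂ) (j : Fin L) :
    siteOp L M j * siteOp L N j = siteOp L (M * N) j := by
  ext v w
  rw [Matrix.mul_apply]
  have hz : ∀ u ∉ Finset.univ.image (Function.update v j),
      siteOp L M j v u * siteOp L N j u w = 0 := by
    intro u hu
    rw [siteOp_apply]
    rw [if_neg, mul_zero, zero_mul]
    intro hall
    apply hu
    rw [Finset.mem_image]
    refine ⟨u j, Finset.mem_univ _, ?_⟩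
    funext i
    by_cases hi : i = j
    · subst hi; simp
    · rw [Function.update_of_ne hi, hall i hi]
  rw [← Finset.sum_subset (Finset.subset_univ _) (fun u _ hu => hz u hu),
    Finset.sum_image (fun a _ b _ h => Function.update_injective v j h)]
  have key : ∀ b : Fin 2, siteOp L M j v (Function.update v j b) * siteOp L N j (Function.update v j b) w
      = M (v j) b * N b (w j) * if ∀ i, i ≠ j → v i = w i then 1 else 0 := by
    intro b
    rw [siteOp_apply, siteOp_apply]
    rw [if_pos (fun i hi => by rw [Function.update_of_ne hi])]
    simp only [Function.update_self, mul_one]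
    have he : (if ∀ i, i ≠ j → Function.update v j b i = w i then (1:ℂ) else 0)
        = if ∀ i, i ≠ j → v i = w i then 1 else 0 := by
      refine if_congr (forall_congr' fun i => ?_) rfl rfl
      by_cases hi : i = j <;> simp [hi, Function.update_of_ne]
    rw [he]; ring
  rw [Finset.sum_congr rfl fun b _ => key b, ← Finset.sum_mul, siteOp_apply, Matrix.mul_apply]

lemma siteOp_mul_of_ne {L : ℕ} (M N : Matrix (Fin 2) (Fin 2) ℂ) {j k : Fin L} (h : j ≠ k) :
    siteOp L M j * siteOp L N k = Matrix.of (fun v w =>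
      M (v j) (w j) * N (v k) (w k) * if ∀ i, i ≠ j → i ≠ k → v i = w i then 1 else 0) := by
  ext v w
  rw [Matrix.mul_apply, Matrix.of_apply]
  rw [Finset.sum_eq_single (Function.update v j (w j))]
  · rw [siteOp_apply, siteOp_apply]
    rw [if_pos (fun i hi => by rw [Function.update_of_ne hi])]
    rw [Function.update_self, Function.update_of_ne (Ne.symm h)]
    have he : (if ∀ i, i ≠ k → Function.update v j (w j) i = w i then (1:ℂ) else 0)
        = if ∀ i, i ≠ j → i ≠ k → v i = w i then 1 else 0 := by
      refine if_congr ?_ rfl rfl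
      constructor
      · intro hall i hij hik
        have := hall i hik
        rwa [Function.update_of_ne hij] at this
      · intro hall i hik
        by_cases hij : i = j
        · subst hij; simp
        · rw [Function.update_of_ne hij]; exact hall i hij hik
    rw [he]; ring
  · intro u _ hu
    rw [siteOp_apply, siteOp_apply]
    by_cases h1 : ∀ i, i ≠ j → v i = u i
    · by_cases h2 : ∀ i, i ≠ k → u i = w i
      · exfalso
        apply hu
        funext i
        by_cases hij : i = j
        · subst hij; rw [Function.update_self]; exact h2 _ h
        · rw [Function.update_of_ne hij]; exact (h1 i hij).symm
      · rw [if_neg h2]; simp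
    · rw [if_neg h1]; simp
  · intro hmem
    exact absurd (Finset.mem_univ _) hmem

lemma siteOp_commute {L : ℕ} (M N : Matrix (Fin 2) (Fin 2) ℂ) {j k : Fin L} (h : j ≠ k) :
    Commute (siteOp L M j) (siteOp L N k) := by
  show _ = _
  rw [siteOp_mul_of_ne M N h, siteOp_mul_of_ne N M (Ne.symm h)]
  ext v w
  rw [Matrix.of_apply, Matrix.of_apply]
  have he : (if ∀ i, i ≠ j → i ≠ k → v i = w i then (1:ℂ) else 0)
      = if ∀ i, i ≠ k → i ≠ j → v i = w i then 1 else 0 :=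
    if_congr (forall_congr' fun i => by tauto) rfl rfl
  rw [he]; ring

lemma pauliXY : PauliX * PauliY = Complex.I • PauliZ := by
  ext i j
  fin_cases i <;> fin_cases j <;>
    simp [PauliX, PauliY, PauliZ, Matrix.mul_apply, Fin.sum_univ_two]

lemma pauliYX : PauliY * PauliX = (-Complex.I) • PauliZ := by
  ext i j
  fin_cases i <;> fin_cases j <;>
    simp [PauliX, PauliY, PauliZ, Matrix.mul_apply, Fin.sum_univ_two]
section
variable {L : ℕ} [NeZero L]

lemma fin_self_ne_add_one (hL : 2 ≤ L) (a : Fin L) : a ≠ a + 1 := by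
  intro h
  have h1 : (1 : Fin L) = 0 := by
    have := h.symm
    rwa [add_eq_left] at this
  have := Fin.one_eq_zero_iff.mp h1
  omega

lemma fin_two (a : Fin L) : a + 2 = (a + 1) + 1 := by
  rw [add_assoc]
  norm_num
  open Fin.CommRing in exact (one_add_one_eq_two (R := Fin L)).symm

lemma comm4 {α : Type*} [Monoid α] {a b c d : α}
    (hac : Commute a c) (had : Commute a d) (hbd : Commute b d) :
    (c * d) * (a * b) = (a * (c * b)) * d := by
  calc (c * d) * (a * b) = c * (d * a) * b := by
        rw [mul_assoc c d (a*b), ← mul_assoc d a b, ← mul_assoc]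
    _ = c * (a * d) * b := by rw [← had.eq]
    _ = (c * a) * (d * b) := by rw [← mul_assoc, mul_assoc]
    _ = (a * c) * (b * d) := by rw [← hac.eq, ← hbd.eq]
    _ = (a * (c * b)) * d := by rw [mul_assoc, ← mul_assoc c b d, ← mul_assoc]

lemma assoc4 {α : Type*} [Monoid α] (a b c d : α) :
    (a * b) * (c * d) = (a * (b * c)) * d := by
  rw [mul_assoc, ← mul_assoc b c d, ← mul_assoc]

lemma key (hL : 2 ≤ L) (j k : Fin L) :
    (siteOp L PauliX j * siteOp L PauliX (j+1)) * (siteOp L PauliY k * siteOp L PauliY (k+1))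
      - (siteOp L PauliY k * siteOp L PauliY (k+1)) * (siteOp L PauliX j * siteOp L PauliX (j+1))
    = (if k = j + 1 then
        (2 * Complex.I) • (siteOp L PauliX j * siteOp L PauliZ (j+1) * siteOp L PauliY (j+2)) else 0)
      + (if j = k + 1 then
        (2 * Complex.I) • (siteOp L PauliY k * siteOp L PauliZ (k+1) * siteOp L PauliX (k+2)) else 0) := by
  by_cases h1 : k = j + 1
  · by_cases h2 : j = k + 1
    · -- both: L = 2 style, everything cancels
      have hjk : j ≠ k := h1 ▸ fin_self_ne_add_one hL j
      have hkj : k ≠ j := hjk.symm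
      have hj2 : j + 2 = j := by rw [fin_two, ← h1, ← h2]
      have hk2 : k + 2 = k := by rw [fin_two, ← h2, ← h1]
      rw [if_pos h1, if_pos h2, ← h1, ← h2, hj2, hk2]
      have e1 : (siteOp L PauliX j * siteOp L PauliX k) * (siteOp L PauliY k * siteOp L PauliY j)
          = (Complex.I * Complex.I) • (siteOp L PauliZ j * siteOp L PauliZ k) := by
        calc (siteOp L PauliX j * siteOp L PauliX k) * (siteOp L PauliY k * siteOp L PauliY j)
            = siteOp L PauliX j * ((siteOp L PauliX k * siteOp L PauliY k) * siteOp L PauliY j) := by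
              rw [mul_assoc, ← mul_assoc (siteOp L PauliX k)]
          _ = siteOp L PauliX j * (siteOp L (PauliX * PauliY) k * siteOp L PauliY j) := by
              rw [siteOp_mul_same]
          _ = siteOp L PauliX j * (siteOp L PauliY j * siteOp L (PauliX * PauliY) k) := by
              rw [(siteOp_commute (PauliX * PauliY) PauliY hkj).eq]
          _ = (siteOp L PauliX j * siteOp L PauliY j) * siteOp L (PauliX * PauliY) k := by
              rw [mul_assoc]
          _ = siteOp L (PauliX * PauliY) j * siteOp L (PauliX * PauliY) k := by
              rw [siteOp_mul_same]
          _ = (Complex.I • siteOp L PauliZ j) * (Complex.I • siteOp L PauliZ k) := by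
              rw [pauliXY, siteOp_smul, siteOp_smul]
          _ = (Complex.I * Complex.I) • (siteOp L PauliZ j * siteOp L PauliZ k) := by
              rw [Matrix.smul_mul, Matrix.mul_smul, smul_smul]
      have e2 : (siteOp L PauliY k * siteOp L PauliY j) * (siteOp L PauliX j * siteOp L PauliX k)
          = ((-Complex.I) * (-Complex.I)) • (siteOp L PauliZ j * siteOp L PauliZ k) := by
        calc (siteOp L PauliY k * siteOp L PauliY j) * (siteOp L PauliX j * siteOp L PauliX k)
            = siteOp L PauliY k * ((siteOp L PauliY j * siteOp L PauliX j) * siteOp L PauliX k) := by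
              rw [mul_assoc, ← mul_assoc (siteOp L PauliY j)]
          _ = siteOp L PauliY k * (siteOp L (PauliY * PauliX) j * siteOp L PauliX k) := by
              rw [siteOp_mul_same]
          _ = (siteOp L PauliY k * siteOp L (PauliY * PauliX) j) * siteOp L PauliX k := by
              rw [← mul_assoc]
          _ = (siteOp L (PauliY * PauliX) j * siteOp L PauliY k) * siteOp L PauliX k := by
              rw [(siteOp_commute (PauliY * PauliX) PauliY hjk).symm.eq]
          _ = siteOp L (PauliY * PauliX) j * (siteOp L PauliY k * siteOp L PauliX k) := by
              rw [mul_assoc]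
          _ = siteOp L (PauliY * PauliX) j * siteOp L (PauliY * PauliX) k := by
              rw [siteOp_mul_same]
          _ = ((-Complex.I) • siteOp L PauliZ j) * ((-Complex.I) • siteOp L PauliZ k) := by
              rw [pauliYX, siteOp_smul, siteOp_smul]
          _ = ((-Complex.I) * (-Complex.I)) • (siteOp L PauliZ j * siteOp L PauliZ k) := by
              rw [Matrix.smul_mul, Matrix.mul_smul, smul_smul]
      have e3 : siteOp L PauliX j * siteOp L PauliZ k * siteOp L PauliY j
          = Complex.I • (siteOp L PauliZ j * siteOp L PauliZ k) := by
        calc siteOp L PauliX j * siteOp L PauliZ k * siteOp L PauliY j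
            = siteOp L PauliX j * (siteOp L PauliZ k * siteOp L PauliY j) := by rw [mul_assoc]
          _ = siteOp L PauliX j * (siteOp L PauliY j * siteOp L PauliZ k) := by
              rw [(siteOp_commute PauliZ PauliY hkj).eq]
          _ = (siteOp L PauliX j * siteOp L PauliY j) * siteOp L PauliZ k := by rw [mul_assoc]
          _ = siteOp L (PauliX * PauliY) j * siteOp L PauliZ k := by rw [siteOp_mul_same]
          _ = Complex.I • (siteOp L PauliZ j * siteOp L PauliZ k) := by
              rw [pauliXY, siteOp_smul, Matrix.smul_mul]
      have e4 : siteOp L PauliY k * siteOp L PauliZ j * siteOp L PauliX k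
          = (-Complex.I) • (siteOp L PauliZ j * siteOp L PauliZ k) := by
        calc siteOp L PauliY k * siteOp L PauliZ j * siteOp L PauliX k
            = (siteOp L PauliZ j * siteOp L PauliY k) * siteOp L PauliX k := by
              rw [(siteOp_commute PauliY PauliZ hkj).eq]
          _ = siteOp L PauliZ j * (siteOp L PauliY k * siteOp L PauliX k) := by rw [mul_assoc]
          _ = siteOp L PauliZ j * siteOp L (PauliY * PauliX) k := by rw [siteOp_mul_same]
          _ = (-Complex.I) • (siteOp L PauliZ j * siteOp L PauliZ k) := by
              rw [pauliYX, siteOp_smul, Matrix.mul_smul]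
      rw [e1, e2, e3, e4, ← sub_smul, smul_smul, smul_smul, ← add_smul]
      congr 1
      ring
    · -- k = j + 1, j ≠ k + 1 : overlap at site j+1
      subst h1
      rw [if_pos rfl, if_neg h2, add_zero, ← fin_two]
      have h01 : j ≠ j + 1 := fin_self_ne_add_one hL j
      have h12 : j + 1 ≠ j + 2 := by rw [fin_two]; exact fin_self_ne_add_one hL _
      have h02 : j ≠ j + 2 := by rw [fin_two]; exact h2
      have e1 : (siteOp L PauliX j * siteOp L PauliX (j+1)) * (siteOp L PauliY (j+1) * siteOp L PauliY (j+2))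
          = Complex.I • (siteOp L PauliX j * siteOp L PauliZ (j+1) * siteOp L PauliY (j+2)) := by
        rw [assoc4, siteOp_mul_same, pauliXY, siteOp_smul, Matrix.mul_smul, Matrix.smul_mul]
      have e2 : (siteOp L PauliY (j+1) * siteOp L PauliY (j+2)) * (siteOp L PauliX j * siteOp L PauliX (j+1))
          = (-Complex.I) • (siteOp L PauliX j * siteOp L PauliZ (j+1) * siteOp L PauliY (j+2)) := by
        rw [comm4 (siteOp_commute _ _ h01) (siteOp_commute _ _ h02) (siteOp_commute _ _ h12),
          siteOp_mul_same, pauliYX, siteOp_smul, Matrix.mul_smul, Matrix.smul_mul]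
      rw [e1, e2, ← sub_smul]
      congr 1
      ring
  · by_cases h2 : j = k + 1
    · -- j = k + 1 : overlap at site k+1
      subst h2
      rw [if_neg h1, if_pos rfl, zero_add, ← fin_two]
      have h01 : k ≠ k + 1 := fin_self_ne_add_one hL k
      have h12 : k + 1 ≠ k + 2 := by rw [fin_two]; exact fin_self_ne_add_one hL _
      have h02 : k ≠ k + 2 := by rw [fin_two]; exact h1
      have e1 : (siteOp L PauliX (k+1) * siteOp L PauliX (k+2)) * (siteOp L PauliY k * siteOp L PauliY (k+1))
          = Complex.I • (siteOp L PauliY k * siteOp L PauliZ (k+1) * siteOp L PauliX (k+2)) := by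
        rw [comm4 (siteOp_commute _ _ h01) (siteOp_commute _ _ h02) (siteOp_commute _ _ h12),
          siteOp_mul_same, pauliXY, siteOp_smul, Matrix.mul_smul, Matrix.smul_mul]
      have e2 : (siteOp L PauliY k * siteOp L PauliY (k+1)) * (siteOp L PauliX (k+1) * siteOp L PauliX (k+2))
          = (-Complex.I) • (siteOp L PauliY k * siteOp L PauliZ (k+1) * siteOp L PauliX (k+2)) := by
        rw [assoc4, siteOp_mul_same, pauliYX, siteOp_smul, Matrix.mul_smul, Matrix.smul_mul]
      rw [e1, e2, ← sub_smul]
      congr 1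
      ring
    · -- disjoint or identical bonds : commute
      rw [if_neg h1, if_neg h2, add_zero, sub_eq_zero]
      by_cases h3 : k = j
      · subst h3
        have h01 : k + 1 ≠ k := (fin_self_ne_add_one hL k).symm
        have e1 : (siteOp L PauliX k * siteOp L PauliX (k+1)) * (siteOp L PauliY k * siteOp L PauliY (k+1))
            = (Complex.I * Complex.I) • (siteOp L PauliZ k * siteOp L PauliZ (k+1)) := by
          rw [(siteOp_commute PauliX PauliY h01).mul_mul_mul_comm, siteOp_mul_same,
            siteOp_mul_same, pauliXY, siteOp_smul, siteOp_smul, Matrix.smul_mul, Matrix.mul_smul, smul_smul]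
        have e2 : (siteOp L PauliY k * siteOp L PauliY (k+1)) * (siteOp L PauliX k * siteOp L PauliX (k+1))
            = ((-Complex.I) * (-Complex.I)) • (siteOp L PauliZ k * siteOp L PauliZ (k+1)) := by
          rw [(siteOp_commute PauliY PauliX h01).mul_mul_mul_comm, siteOp_mul_same,
            siteOp_mul_same, pauliYX, siteOp_smul, siteOp_smul, Matrix.smul_mul, Matrix.mul_smul, smul_smul]
        rw [e1, e2]
        congr 1
        ring
      · -- four distinct sites
        have hjk : j ≠ k := fun h => h3 h.symm
        have hjk1 : j ≠ k + 1 := h2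
        have hj1k : j + 1 ≠ k := fun h => h1 h.symm
        have hj1k1 : j + 1 ≠ k + 1 := fun h => hjk (add_right_cancel h)
        exact (Commute.mul_left
          ((siteOp_commute _ _ hjk).mul_right (siteOp_commute _ _ hjk1))
          ((siteOp_commute _ _ hj1k).mul_right (siteOp_commute _ _ hj1k1))).eq
end

/-- For the periodic XX chain with `A = (J/4)Σⱼ XⱼXⱼ₊₁` and `B = (J/4)Σⱼ YⱼYⱼ₊₁` on `L ≥ 2`
qubits, `[A,B] = (iJ²/8) Σⱼ (XⱼYⱼ₊₂ + YⱼXⱼ₊₂) Zⱼ₊₁`. -/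
theorem stmt16 (L : ℕ) [NeZero L] (hL : 2 ≤ L) (J : ℝ)
    (A B : Matrix (Fin L → Fin 2) (Fin L → Fin 2) ℂ)
    (hA : A = ((J : ℂ) / 4) • ∑ j : Fin L, siteOp L PauliX j * siteOp L PauliX (j + 1))
    (hB : B = ((J : ℂ) / 4) • ∑ j : Fin L, siteOp L PauliY j * siteOp L PauliY (j + 1)) :
    A * B - B * A
      = (Complex.I * (J : ℂ) ^ 2 / 8)
          • ∑ j : Fin L,
              (siteOp L PauliX j * siteOp L PauliY (j + 2)
                + siteOp L PauliY j * siteOp L PauliX (j + 2)) * siteOp L PauliZ (j + 1) := by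
  subst hA hB
  rw [Matrix.smul_mul, Matrix.mul_smul, smul_smul, Matrix.smul_mul, Matrix.mul_smul, smul_smul,
    ← smul_sub]
  have hBA : (∑ j : Fin L, siteOp L PauliY j * siteOp L PauliY (j + 1)) *
      (∑ j : Fin L, siteOp L PauliX j * siteOp L PauliX (j + 1))
      = ∑ j : Fin L, ∑ k : Fin L,
          (siteOp L PauliY k * siteOp L PauliY (k+1)) * (siteOp L PauliX j * siteOp L PauliX (j+1)) := by
    rw [Finset.sum_mul_sum]
    exact Finset.sum_comm
  rw [Finset.sum_mul_sum, hBA, ← Finset.sum_sub_distrib]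
  have main : (∑ j : Fin L,
        ((∑ k : Fin L, (siteOp L PauliX j * siteOp L PauliX (j+1)) * (siteOp L PauliY k * siteOp L PauliY (k+1)))
        - ∑ k : Fin L, (siteOp L PauliY k * siteOp L PauliY (k+1)) * (siteOp L PauliX j * siteOp L PauliX (j+1))))
      = (2 * Complex.I) • (∑ j : Fin L, siteOp L PauliX j * siteOp L PauliZ (j+1) * siteOp L PauliY (j+2))
        + (2 * Complex.I) • (∑ k : Fin L, siteOp L PauliY k * siteOp L PauliZ (k+1) * siteOp L PauliX (k+2)) := by
    calc (∑ j : Fin L,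
        ((∑ k : Fin L, (siteOp L PauliX j * siteOp L PauliX (j+1)) * (siteOp L PauliY k * siteOp L PauliY (k+1)))
        - ∑ k : Fin L, (siteOp L PauliY k * siteOp L PauliY (k+1)) * (siteOp L PauliX j * siteOp L PauliX (j+1))))
        = ∑ j : Fin L, ∑ k : Fin L,
            ((if k = j + 1 then
              (2 * Complex.I) • (siteOp L PauliX j * siteOp L PauliZ (j+1) * siteOp L PauliY (j+2)) else 0)
            + (if j = k + 1 then
              (2 * Complex.I) • (siteOp L PauliY k * siteOp L PauliZ (k+1) * siteOp L PauliX (k+2)) else 0)) :=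
          Finset.sum_congr rfl fun j _ => by
            rw [← Finset.sum_sub_distrib]
            exact Finset.sum_congr rfl fun k _ => key hL j k
      _ = (∑ j : Fin L, ∑ k : Fin L, (if k = j + 1 then
              (2 * Complex.I) • (siteOp L PauliX j * siteOp L PauliZ (j+1) * siteOp L PauliY (j+2)) else 0))
          + ∑ j : Fin L, ∑ k : Fin L, (if j = k + 1 then
              (2 * Complex.I) • (siteOp L PauliY k * siteOp L PauliZ (k+1) * siteOp L PauliX (k+2)) else 0) := by
          rw [← Finset.sum_add_distrib]
          exact Finset.sum_congr rfl fun j _ => Finset.sum_add_distrib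
      _ = (2 * Complex.I) • (∑ j : Fin L, siteOp L PauliX j * siteOp L PauliZ (j+1) * siteOp L PauliY (j+2))
          + (2 * Complex.I) • (∑ k : Fin L, siteOp L PauliY k * siteOp L PauliZ (k+1) * siteOp L PauliX (k+2)) := by
          rw [Finset.smul_sum, Finset.smul_sum]
          congr 1
          · exact Finset.sum_congr rfl fun j _ => by simp [Finset.sum_ite_eq']
          · rw [Finset.sum_comm]
            exact Finset.sum_congr rfl fun k _ => by simp [Finset.sum_ite_eq']
  rw [main]
  have hRHS : ∀ j : Fin L,
      (siteOp L PauliX j * siteOp L PauliY (j + 2) + siteOp L PauliY j * siteOp L PauliX (j + 2))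
          * siteOp L PauliZ (j + 1)
      = siteOp L PauliX j * siteOp L PauliZ (j+1) * siteOp L PauliY (j+2)
        + siteOp L PauliY j * siteOp L PauliZ (j+1) * siteOp L PauliX (j+2) := by
    intro j
    have hc : (j : Fin L) + 2 ≠ j + 1 := by
      rw [fin_two]
      exact (fin_self_ne_add_one hL (j+1)).symm
    rw [add_mul, mul_assoc, (siteOp_commute PauliY PauliZ hc).eq, ← mul_assoc,
      mul_assoc (siteOp L PauliY j), (siteOp_commute PauliX PauliZ hc).eq, ← mul_assoc]
  rw [Finset.sum_congr rfl fun j _ => hRHS j, Finset.sum_add_distrib, smul_add, smul_add,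
    smul_smul, smul_smul]
  congr 1 <;> congr 1 <;> ring
end
end
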